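/- arXiv:2601.11016 — 4 statements merged into one kernel-verified Lean document; each statement's English description precedes it below -/
import Mathlib

section
/- Consider a soft regression tree of depth D on ℝ^{d_x}, a leaf l whose root-to-leaf path contains at most D−1 internal nodes (i.e. |Λ(l)| ≤ D−1), and suppose ‖w_i‖ ≤ W for every internal node i ∈ Λ(l), where ‖·‖ is the Euclidean norm. Then for every x ∈ ℝ^{d_x}, the spectral (operator) norm of the Hessian of the route probability satisfies ‖∇²p_l(x)‖₂ ≤ p_l(x) · [ (D−1)² W² + (1/4)(D−1) W² ]. -/
/-!
Every factor of the route probability has the form `y ↦ S(ℓ y + c)` with `ℓ = ±⟪w_i, ·⟫`,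
since `1 - S(z) = S(-z)`. From `S' = S(1 - S)` and `S'' = S(1 - S)(1 - 2S)` one gets
`|S'| ≤ S` and `|S''| ≤ S`, so each factor `g` satisfies `‖∇g‖ ≤ W g` and `‖∇²g‖ ≤ W² g`.
Relative bounds of this kind multiply by the Leibniz rule: if `f` and `g` have constants
`(a, b)` and `(c, d)`, then `f g` has constants `(a + c, b + 2ac + d)`. For a product of
`N ≤ D - 1` factors this gives `‖∇²p_l‖ ≤ N² W² p_l`.
-/

open scoped BigOperators

/-- The sigmoid function `S(z) = 1/(1+e^{-z})`. -/
noncomputable def sigmoid (z : ℝ) : ℝ := 1 / (1 + Real.exp (-z))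

/-- Route probability of a fixed leaf `l` of a soft regression tree, described by the
internal nodes `Λ(l)` on the root-to-leaf path (index type `ι`), their weights `w i`,
biases `b i`, and the side taken: `side i = true` means `i ∈ L(l)` (path goes left,
factor `S(w_iᵀx + b_i)`), `side i = false` means `i ∈ R(l)` (path goes right,
factor `1 - S(w_iᵀx + b_i)`). -/
noncomputable def pathProb {dx : ℕ} {ι : Type*} [Fintype ι]
    (w : ι → EuclideanSpace ℝ (Fin dx)) (b : ι → ℝ) (side : ι → Bool)
    (x : EuclideanSpace ℝ (Fin dx)) : ℝ :=
  ∏ i, if side i then sigmoid ((inner ℝ (w i) x : ℝ) + b i)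
       else 1 - sigmoid ((inner ℝ (w i) x : ℝ) + b i)

lemma sigmoid_eq_real_sigmoid : sigmoid = Real.sigmoid :=
  funext fun z => by rw [sigmoid, Real.sigmoid_def, one_div]

lemma one_sub_sigmoid (z : ℝ) : 1 - sigmoid z = sigmoid (-z) := by
  rw [sigmoid_eq_real_sigmoid, Real.sigmoid_neg]

lemma Real.differentiable_sigmoid : Differentiable ℝ Real.sigmoid :=
  fun x => (Real.hasDerivAt_sigmoid x).differentiableAt

lemma Real.differentiable_deriv_sigmoid : Differentiable ℝ (deriv Real.sigmoid) := by
  rw [Real.deriv_sigmoid]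
  exact Real.differentiable_sigmoid.mul (Real.differentiable_sigmoid.const_sub 1)

lemma Real.deriv_deriv_sigmoid :
    deriv (deriv Real.sigmoid) =
      fun x => Real.sigmoid x * (1 - Real.sigmoid x) * (1 - 2 * Real.sigmoid x) := by
  rw [Real.deriv_sigmoid]
  funext x
  rw [deriv_fun_mul (Real.differentiable_sigmoid x) (Real.differentiable_sigmoid.const_sub 1 x),
    deriv_const_sub, Real.deriv_sigmoid]
  ring

lemma Real.abs_deriv_sigmoid_le (x : ℝ) : |deriv Real.sigmoid x| ≤ Real.sigmoid x := by
  have h0 := Real.sigmoid_pos x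
  have h1 := Real.sigmoid_lt_one x
  rw [Real.deriv_sigmoid, abs_of_pos (by nlinarith : 0 < Real.sigmoid x * (1 - Real.sigmoid x))]
  nlinarith

lemma Real.abs_deriv_deriv_sigmoid_le (x : ℝ) :
    |deriv (deriv Real.sigmoid) x| ≤ Real.sigmoid x := by
  have h0 := Real.sigmoid_pos x
  have h1 := Real.sigmoid_lt_one x
  rw [Real.deriv_deriv_sigmoid, abs_mul,
    abs_of_pos (by nlinarith : 0 < Real.sigmoid x * (1 - Real.sigmoid x))]
  have h2 : |1 - 2 * Real.sigmoid x| ≤ 1 := abs_le.mpr ⟨by linarith, by linarith⟩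
  calc Real.sigmoid x * (1 - Real.sigmoid x) * |1 - 2 * Real.sigmoid x|
      ≤ Real.sigmoid x * (1 - Real.sigmoid x) * 1 :=
        mul_le_mul_of_nonneg_left h2 (by nlinarith)
    _ ≤ Real.sigmoid x := by nlinarith

section RelDerivBounds

variable {E : Type*} [NormedAddCommGroup E] [NormedSpace ℝ E]

lemma ContinuousLinearMap.norm_smul_le_mul_of_le {F : Type*} [SeminormedAddCommGroup F]
    [NormedSpace ℝ F] {r C : ℝ} {v : E →L[ℝ] F} (hr : 0 ≤ r) (hv : ‖v‖ ≤ C) :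
    ‖r • v‖ ≤ r * C :=
  (v.opNorm_smul_le r).trans
    (by rw [Real.norm_of_nonneg hr]; exact mul_le_mul_of_nonneg_left hv hr)

structure RelDerivBounds (f : E → ℝ) (x : E) (a b : ℝ) : Prop where
  nonneg : 0 ≤ f x
  differentiable : Differentiable ℝ f
  differentiableAt_fderiv : DifferentiableAt ℝ (fderiv ℝ f) x
  norm_fderiv_le : ‖fderiv ℝ f x‖ ≤ a * f x
  norm_fderiv_fderiv_le : ‖fderiv ℝ (fderiv ℝ f) x‖ ≤ b * f x

namespace RelDerivBounds

variable {f g : E → ℝ} {x : E} {a b c d : ℝ}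

lemma const_one : RelDerivBounds (fun _ : E => (1 : ℝ)) x 0 0 where
  nonneg := zero_le_one
  differentiable := differentiable_const 1
  differentiableAt_fderiv := by simp
  norm_fderiv_le := by simp
  norm_fderiv_fderiv_le := by simp [ContinuousLinearMap.opNorm_zero]

lemma mono (h : RelDerivBounds f x a b) {a' b' : ℝ} (ha : a ≤ a') (hb : b ≤ b') :
    RelDerivBounds f x a' b' where
  __ := h
  norm_fderiv_le := h.norm_fderiv_le.trans (mul_le_mul_of_nonneg_right ha h.nonneg)
  norm_fderiv_fderiv_le :=
    h.norm_fderiv_fderiv_le.trans (mul_le_mul_of_nonneg_right hb h.nonneg)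

lemma fderiv_mul_eq (hf : RelDerivBounds f x a b) (hg : RelDerivBounds g x c d) :
    fderiv ℝ (fun y => f y * g y) = fun y => f y • fderiv ℝ g y + g y • fderiv ℝ f y :=
  funext fun y => fderiv_fun_mul (hf.differentiable y) (hg.differentiable y)

lemma hasFDerivAt_fderiv_mul (hf : RelDerivBounds f x a b) (hg : RelDerivBounds g x c d) :
    HasFDerivAt (fderiv ℝ (fun y => f y * g y))
      (f x • fderiv ℝ (fderiv ℝ g) x + (fderiv ℝ f x).smulRight (fderiv ℝ g x) +
        (g x • fderiv ℝ (fderiv ℝ f) x + (fderiv ℝ g x).smulRight (fderiv ℝ f x))) x := by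
  rw [hf.fderiv_mul_eq hg]
  exact ((hf.differentiable x).hasFDerivAt.fun_smul hg.differentiableAt_fderiv.hasFDerivAt).add
    ((hg.differentiable x).hasFDerivAt.fun_smul hf.differentiableAt_fderiv.hasFDerivAt)

lemma mul (hf : RelDerivBounds f x a b) (hg : RelDerivBounds g x c d) :
    RelDerivBounds (fun y => f y * g y) x (a + c) (b + 2 * a * c + d) where
  nonneg := mul_nonneg hf.nonneg hg.nonneg
  differentiable := hf.differentiable.mul hg.differentiable
  differentiableAt_fderiv := (hf.hasFDerivAt_fderiv_mul hg).differentiableAt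
  norm_fderiv_le := by
    rw [hf.fderiv_mul_eq hg]
    have h₁ := ContinuousLinearMap.norm_smul_le_mul_of_le hf.nonneg hg.norm_fderiv_le
    have h₂ := ContinuousLinearMap.norm_smul_le_mul_of_le hg.nonneg hf.norm_fderiv_le
    linarith [norm_add_le (f x • fderiv ℝ g x) (g x • fderiv ℝ f x)]
  norm_fderiv_fderiv_le := by
    rw [(hf.hasFDerivAt_fderiv_mul hg).fderiv]
    have h₁ := ContinuousLinearMap.norm_smul_le_mul_of_le hf.nonneg hg.norm_fderiv_fderiv_le
    have h₂ := ContinuousLinearMap.norm_smul_le_mul_of_le hg.nonneg hf.norm_fderiv_fderiv_le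
    have h₃ : ‖fderiv ℝ f x‖ * ‖fderiv ℝ g x‖ ≤ a * f x * (c * g x) :=
      mul_le_mul hf.norm_fderiv_le hg.norm_fderiv_le (norm_nonneg _)
        ((norm_nonneg _).trans hf.norm_fderiv_le)
    refine (ContinuousLinearMap.opNorm_add_le _ _).trans ((add_le_add
      (ContinuousLinearMap.opNorm_add_le _ _) (ContinuousLinearMap.opNorm_add_le _ _)).trans ?_)
    rw [ContinuousLinearMap.norm_smulRight_apply, ContinuousLinearMap.norm_smulRight_apply]
    linarith [mul_comm ‖fderiv ℝ f x‖ ‖fderiv ℝ g x‖]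

lemma finset_prod {ι : Type*} {s : Finset ι} {f : ι → E → ℝ}
    (h : ∀ i ∈ s, RelDerivBounds (f i) x a b) :
    RelDerivBounds (fun y => ∏ i ∈ s, f i y) x (s.card * a)
      (s.card * b + s.card * (s.card - 1) * a ^ 2) := by
  classical
  induction s using Finset.induction_on with
  | empty => simpa using const_one
  | insert i s hi ih =>
    simp only [Finset.prod_insert hi, Finset.card_insert_of_notMem hi]
    refine ((h i (s.mem_insert_self i)).mul
      (ih fun j hj => h j (Finset.mem_insert_of_mem hj))).mono (le_of_eq ?_) (le_of_eq ?_) <;>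
      push_cast <;> ring

end RelDerivBounds

lemma relDerivBounds_comp_affine {g : ℝ → ℝ} (ℓ : E →L[ℝ] ℝ) (c : ℝ) (x : E)
    (hg : Differentiable ℝ g) (hg' : DifferentiableAt ℝ (deriv g) (ℓ x + c))
    (h₀ : 0 ≤ g (ℓ x + c)) (h₁ : |deriv g (ℓ x + c)| ≤ g (ℓ x + c))
    (h₂ : |deriv (deriv g) (ℓ x + c)| ≤ g (ℓ x + c)) :
    RelDerivBounds (fun y => g (ℓ y + c)) x ‖ℓ‖ (‖ℓ‖ ^ 2) := by
  have hℓ : ∀ y, HasFDerivAt (fun y => ℓ y + c) ℓ y := fun y => ℓ.hasFDerivAt.add_const c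
  have hD : fderiv ℝ (fun y => g (ℓ y + c)) = fun y => deriv g (ℓ y + c) • ℓ :=
    funext fun y => ((hg _).hasDerivAt.comp_hasFDerivAt y (hℓ y)).fderiv
  have hD₂ : HasFDerivAt (fun y => deriv g (ℓ y + c) • ℓ)
      ((deriv (deriv g) (ℓ x + c) • ℓ).smulRight ℓ) x :=
    (hg'.hasDerivAt.comp_hasFDerivAt (f := fun y => ℓ y + c) x (hℓ x)).smul_const ℓ
  refine ⟨h₀, fun y => ((hg _).comp y (hℓ y).differentiableAt), ?_, ?_, ?_⟩
  · rw [hD]; exact hD₂.differentiableAt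
  · rw [hD, norm_smul, Real.norm_eq_abs, mul_comm]
    exact mul_le_mul_of_nonneg_left h₁ (norm_nonneg ℓ)
  · rw [hD, hD₂.fderiv, ContinuousLinearMap.norm_smulRight_apply, norm_smul, Real.norm_eq_abs]
    calc |deriv (deriv g) (ℓ x + c)| * ‖ℓ‖ * ‖ℓ‖ = ‖ℓ‖ ^ 2 * |deriv (deriv g) (ℓ x + c)| := by
          ring
      _ ≤ ‖ℓ‖ ^ 2 * g (ℓ x + c) := mul_le_mul_of_nonneg_left h₂ (sq_nonneg _)

lemma relDerivBounds_sigmoid_affine (ℓ : E →L[ℝ] ℝ) (c : ℝ) (x : E) :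
    RelDerivBounds (fun y => sigmoid (ℓ y + c)) x ‖ℓ‖ (‖ℓ‖ ^ 2) := by
  rw [sigmoid_eq_real_sigmoid]
  exact relDerivBounds_comp_affine ℓ c x Real.differentiable_sigmoid
    (Real.differentiable_deriv_sigmoid _) (Real.sigmoid_nonneg _)
    (Real.abs_deriv_sigmoid_le _) (Real.abs_deriv_deriv_sigmoid_le _)

end RelDerivBounds

lemma relDerivBounds_routeFactor {dx : ℕ} (w : EuclideanSpace ℝ (Fin dx)) (c : ℝ)
    (left : Bool) (x : EuclideanSpace ℝ (Fin dx)) :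
    RelDerivBounds (fun y => if left then sigmoid (inner ℝ w y + c)
      else 1 - sigmoid (inner ℝ w y + c)) x ‖w‖ (‖w‖ ^ 2) := by
  cases left
  · simp only [Bool.false_eq_true, if_false, one_sub_sigmoid, neg_add]
    simpa [innerSL_apply_norm] using relDerivBounds_sigmoid_affine (-innerSL ℝ w) (-c) x
  · simpa [innerSL_apply_norm] using relDerivBounds_sigmoid_affine (innerSL ℝ w) c x

theorem pathProb_hessian_norm_le_general {dx : ℕ} {ι : Type*} [Fintype ι]
    (D : ℕ) (hD : 1 ≤ D)
    (w : ι → EuclideanSpace ℝ (Fin dx)) (b : ι → ℝ) (side : ι → Bool)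
    (W : ℝ)
    (hcard : Fintype.card ι ≤ D - 1)
    (hW : ∀ i, ‖w i‖ ≤ W)
    (x : EuclideanSpace ℝ (Fin dx)) :
    ‖fderiv ℝ (fun y => fderiv ℝ (pathProb w b side) y) x‖ ≤
      pathProb w b side x *
        (((D : ℝ) - 1) ^ 2 * W ^ 2 + (1 / 4) * ((D : ℝ) - 1) * W ^ 2) := by
  set N := Fintype.card ι
  have hprod : RelDerivBounds (pathProb w b side) x (N * W) (N * W ^ 2 + N * (N - 1) * W ^ 2) :=
    RelDerivBounds.finset_prod fun i _ => (relDerivBounds_routeFactor (w i) (b i) (side i) x).mono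
      (hW i) (pow_le_pow_left₀ (norm_nonneg _) (hW i) 2)
  have hN : (N : ℝ) ≤ D - 1 := by
    rw [← Nat.cast_one, ← Nat.cast_sub hD]; exact_mod_cast hcard
  calc ‖fderiv ℝ (fderiv ℝ (pathProb w b side)) x‖
      ≤ (N * W ^ 2 + N * (N - 1) * W ^ 2) * pathProb w b side x := hprod.norm_fderiv_fderiv_le
    _ = pathProb w b side x * (N ^ 2 * W ^ 2) := by ring
    _ ≤ pathProb w b side x * (((D : ℝ) - 1) ^ 2 * W ^ 2 + (1 / 4) * ((D : ℝ) - 1) * W ^ 2) := by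
      have hN₀ : (0 : ℝ) ≤ N := N.cast_nonneg
      gcongr ?_ * ?_
      · exact hprod.nonneg
      · exact le_add_of_le_of_nonneg (by gcongr)
          (mul_nonneg (mul_nonneg (by norm_num) (hN₀.trans hN)) (sq_nonneg W))

/-- If the root-to-leaf path of leaf `l` contains at most `D - 1` internal nodes
(`|Λ(l)| ≤ D − 1`) and `‖w_i‖ ≤ W` for every `i ∈ Λ(l)`, then the spectral
(operator) norm of the Hessian of the route probability satisfies
`‖∇²p_l(x)‖₂ ≤ p_l(x) · [ (D−1)² W² + (1/4)(D−1) W² ]` for every `x`.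
The Hessian is realized as the second Fréchet derivative of `p_l`, a continuous
bilinear map whose operator norm equals the spectral norm of the Hessian matrix. -/
theorem pathProb_hessian_norm_le {dx : ℕ} {ι : Type*} [Fintype ι]
    (D : ℕ) (hD : 1 ≤ D)
    (w : ι → EuclideanSpace ℝ (Fin dx)) (b : ι → ℝ) (side : ι → Bool)
    (W : ℝ) (hW0 : 0 ≤ W)
    (hcard : Fintype.card ι ≤ D - 1)
    (hW : ∀ i, ‖w i‖ ≤ W)
    (x : EuclideanSpace ℝ (Fin dx)) :
    ‖fderiv ℝ (fun y => fderiv ℝ (pathProb w b side) y) x‖ ≤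
      pathProb w b side x *
        (((D : ℝ) - 1) ^ 2 * W ^ 2 + (1 / 4) * ((D : ℝ) - 1) * W ^ 2) :=
  pathProb_hessian_norm_le_general D hD w b side W hcard hW x
end

section
/- Let n ∈ ℕ, let p₁,…,pₙ ≥ 0 with Σ_{i=1}^n p_i = 1, let M ≥ 1, and define the weighted geometric mean g(v) = ∏_{i=1}^n v_i^{p_i} on the cube [1, M]^n ⊆ ℝⁿ. Then for every c ∈ [1,M]^n the Hessian of g satisfies ‖∇²g(c)‖₂ ≤ ‖∇²g(c)‖_F ≤ √2 · M (spectral and Frobenius norms), and consequently for all v₁, v₂ ∈ [1,M]^n one has |g(v₁) − g(v₂) − ⟨∇g(v₂), v₁ − v₂⟩| ≤ (√2·M/2) ‖v₁ − v₂‖². -/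
open scoped BigOperators

/-- The weighted geometric mean `g(v) = ∏ i, v_i ^ p_i` on `ℝⁿ` (Euclidean space). -/
noncomputable def geomMean (n : ℕ) (p : Fin n → ℝ) (v : EuclideanSpace ℝ (Fin n)) : ℝ :=
  ∏ i, v i ^ p i

/-- The `(j,k)` entry of the Hessian matrix of the weighted geometric mean at `c`,
realized as an iterated partial (Fréchet) derivative. -/
noncomputable def geomMeanHess (n : ℕ) (p : Fin n → ℝ) (c : EuclideanSpace ℝ (Fin n))
    (j k : Fin n) : ℝ :=
  fderiv ℝ (fun y => fderiv ℝ (geomMean n p) y (EuclideanSpace.single k 1)) c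
    (EuclideanSpace.single j 1)

/-!
On the cube the Hessian entries are `g(c)(p_j p_k - δ_jk p_j)/(c_j c_k)` with `0 ≤ g(c) ≤ M`
(weighted AM-GM) and `c_j c_k ≥ 1`, so the squared Frobenius norm is at most
`M² ∑_{j,k} (p_j p_k - δ_jk p_j)² ≤ M² ((∑ p_j²)² + ∑ p_j²) ≤ 2M²`. Expanding a vector in the
standard basis and applying Cauchy–Schwarz twice bounds the operator norm of a bilinear form
on `ℝⁿ` by its Frobenius norm. The remainder estimate is second-order Taylor along the segment
from `v₂` to `v₁`, which stays in the convex cube.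
-/

open Filter Topology

section Euclidean

variable {ι : Type*} [Fintype ι] [DecidableEq ι]
  {F : Type*} [NormedAddCommGroup F] [NormedSpace ℝ F]

theorem ContinuousLinearMap.opNorm_le_sqrt_sum_sq_norm_apply_single
    (f : EuclideanSpace ℝ ι →L[ℝ] F) :
    ‖f‖ ≤ √(∑ i, ‖f (EuclideanSpace.single i 1)‖ ^ 2) := by
  refine f.opNorm_le_bound (Real.sqrt_nonneg _) fun u => ?_
  have hu : u = ∑ i, u i • EuclideanSpace.single i (1 : ℝ) := by
    simpa using ((EuclideanSpace.basisFun ι ℝ).sum_repr u).symm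
  calc ‖f u‖ = ‖∑ i, u i • f (EuclideanSpace.single i 1)‖ := by
        conv_lhs => rw [hu]
        simp only [map_sum, map_smul]
    _ ≤ ∑ i, ‖u i‖ * ‖f (EuclideanSpace.single i 1)‖ :=
        (norm_sum_le _ _).trans_eq (by simp only [norm_smul])
    _ ≤ √(∑ i, ‖u i‖ ^ 2) * √(∑ i, ‖f (EuclideanSpace.single i 1)‖ ^ 2) :=
        Real.sum_mul_le_sqrt_mul_sqrt _ _ _
    _ = _ := by rw [EuclideanSpace.norm_eq, mul_comm]

theorem ContinuousLinearMap.opNorm_le_sqrt_sum_sum_sq_norm_apply_single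
    (B : EuclideanSpace ℝ ι →L[ℝ] EuclideanSpace ℝ ι →L[ℝ] F) :
    ‖B‖ ≤ √(∑ j, ∑ k,
      ‖B (EuclideanSpace.single j 1) (EuclideanSpace.single k 1)‖ ^ 2) := by
  refine B.opNorm_le_sqrt_sum_sq_norm_apply_single.trans (Real.sqrt_le_sqrt ?_)
  refine Finset.sum_le_sum fun j _ => ?_
  calc ‖B (EuclideanSpace.single j 1)‖ ^ 2 ≤ _ :=
        pow_le_pow_left₀ (norm_nonneg _)
          (B (EuclideanSpace.single j 1)).opNorm_le_sqrt_sum_sq_norm_apply_single 2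
    _ = _ := Real.sq_sqrt (Finset.sum_nonneg fun _ _ => by positivity)

end Euclidean

theorem convex_setOf_forall_apply_mem {ι : Type*} {t : ι → Set ℝ}
    (ht : ∀ i, Convex ℝ (t i)) : Convex ℝ {v : EuclideanSpace ℝ ι | ∀ i, v i ∈ t i} := by
  intro x hx y hy a b ha hb hab i
  simpa using ht i (hx i) (hy i) ha hb hab

theorem EuclideanSpace.eventually_forall_apply_pos {ι : Type*} [Finite ι]
    {c : EuclideanSpace ℝ ι} (hc : ∀ i, 0 < c i) : ∀ᶠ y in 𝓝 c, ∀ i, 0 < y i :=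
  eventually_all.2 fun i => continuousAt_const.eventually_lt
    (EuclideanSpace.proj (𝕜 := ℝ) (ι := ι) i).continuous.continuousAt (hc i)

theorem Finset.sum_sum_sq_mul_sub_ite_le_two {ι : Type*} [Fintype ι] [DecidableEq ι]
    {p : ι → ℝ} (hp : ∀ i, 0 ≤ p i) (hsum : ∑ i, p i = 1) :
    ∑ j, ∑ k, (p j * p k - if j = k then p j else 0) ^ 2 ≤ 2 := by
  have hsq : ∑ i, p i ^ 2 ≤ 1 :=
    (sum_sq_le_sq_sum_of_nonneg fun i _ => hp i).trans_eq (by rw [hsum, one_pow])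
  -- `(a - b)² ≤ a² + b²` for `a, b ≥ 0`
  have hterm (j k : ι) : (p j * p k - if j = k then p j else 0) ^ 2 ≤
      p j ^ 2 * p k ^ 2 + if j = k then p j ^ 2 else 0 := by
    split_ifs <;> nlinarith [mul_nonneg (mul_nonneg (hp j) (hp k)) (hp j)]
  calc ∑ j, ∑ k, (p j * p k - if j = k then p j else 0) ^ 2
      ≤ ∑ j, ∑ k, (p j ^ 2 * p k ^ 2 + if j = k then p j ^ 2 else 0) :=
        sum_le_sum fun j _ => sum_le_sum fun k _ => hterm j k
    _ = (∑ i, p i ^ 2) ^ 2 + ∑ i, p i ^ 2 := by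
        simp only [sum_add_distrib, sum_ite_eq, mem_univ, if_true, ← mul_sum, ← sum_mul, sq]
    _ ≤ 2 := by nlinarith [sum_nonneg fun i (_ : i ∈ univ) => sq_nonneg (p i)]

section Taylor

variable {E F : Type*} [NormedAddCommGroup E] [NormedSpace ℝ E]
  [NormedAddCommGroup F] [NormedSpace ℝ F]

theorem fderiv_fderiv_apply {f : E → F} {x : E} (h : DifferentiableAt ℝ (fderiv ℝ f) x)
    (u w : E) : fderiv ℝ (fun y => fderiv ℝ f y w) x u = fderiv ℝ (fderiv ℝ f) x u w := by
  rw [fderiv_clm_apply h (differentiableAt_const w)]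
  simp

theorem Convex.norm_image_sub_sub_fderiv_le {f : E → F} {s : Set E} (hs : Convex ℝ s)
    (hf : ∀ x ∈ s, DifferentiableAt ℝ f x) (hf' : ∀ x ∈ s, DifferentiableAt ℝ (fderiv ℝ f) x)
    {C : ℝ} (bound : ∀ x ∈ s, ‖fderiv ℝ (fderiv ℝ f) x‖ ≤ C) {x y : E} (hx : x ∈ s)
    (hy : y ∈ s) : ‖f y - f x - fderiv ℝ f x (y - x)‖ ≤ C / 2 * ‖y - x‖ ^ 2 := by
  set d := y - x
  have hseg : ∀ t ∈ Set.Icc (0 : ℝ) 1, x + t • d ∈ s := fun t ht => hs.add_smul_sub_mem hx hy ht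
  have hline (t : ℝ) : HasDerivAt (fun t : ℝ => x + t • d) d t := by
    simpa using ((hasDerivAt_id t).smul_const d).const_add x
  have hderiv : ∀ t ∈ Set.Icc (0 : ℝ) 1, HasDerivAt
      (fun t : ℝ => f (x + t • d) - f x - t • fderiv ℝ f x d)
      (fderiv ℝ f (x + t • d) d - fderiv ℝ f x d) t := fun t ht => by
    simpa using (((hf _ (hseg t ht)).hasFDerivAt.comp_hasDerivAt t (hline t)).sub_const
      (f x)).fun_sub ((hasDerivAt_id t).smul_const (fderiv ℝ f x d))
  have hderiv_le : ∀ t ∈ Set.Ico (0 : ℝ) 1,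
      ‖fderiv ℝ f (x + t • d) d - fderiv ℝ f x d‖ ≤ C * ‖d‖ ^ 2 * t := fun t ht => by
    have hmv := hs.norm_image_sub_le_of_norm_fderiv_le hf' bound hx
      (hseg t (Set.Ico_subset_Icc_self ht))
    calc ‖fderiv ℝ f (x + t • d) d - fderiv ℝ f x d‖
        ≤ ‖fderiv ℝ f (x + t • d) - fderiv ℝ f x‖ * ‖d‖ := by
          rw [← sub_apply]; exact ContinuousLinearMap.le_opNorm _ _
      _ ≤ C * ‖t • d‖ * ‖d‖ := by gcongr; simpa using hmv
      _ = C * ‖d‖ ^ 2 * t := by rw [norm_smul, Real.norm_of_nonneg ht.1]; ring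
  have := image_norm_le_of_norm_deriv_right_le_deriv_boundary
    (fun t ht => (hderiv t ht).continuousAt.continuousWithinAt)
    (fun t ht => (hderiv t (Set.Ico_subset_Icc_self ht)).hasDerivWithinAt)
    (B := fun t => C * ‖d‖ ^ 2 * t ^ 2 / 2) (by simp)
    (fun t => (((hasDerivAt_pow 2 t).const_mul (C * ‖d‖ ^ 2)).div_const 2).congr_deriv (by ring))
    hderiv_le (Set.right_mem_Icc.2 zero_le_one)
  simpa [d, mul_div_right_comm] using this

end Taylor

section GeomMean

variable {n : ℕ} (p : Fin n → ℝ) {c : EuclideanSpace ℝ (Fin n)}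

theorem hasFDerivAt_geomMean (hc : ∀ i, 0 < c i) :
    HasFDerivAt (geomMean n p)
      (∑ i, (geomMean n p c * p i / c i) • EuclideanSpace.proj (𝕜 := ℝ) (ι := Fin n) i) c := by
  have hfactor (i : Fin n) : HasFDerivAt (fun v : EuclideanSpace ℝ (Fin n) => v i ^ p i)
      ((p i * c i ^ (p i - 1)) • EuclideanSpace.proj (𝕜 := ℝ) (ι := Fin n) i) c := by
    have hpow : HasDerivAt (fun x : ℝ => x ^ p i) (p i * c i ^ (p i - 1)) (c i) :=
      Real.hasDerivAt_rpow_const (Or.inl (hc i).ne')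
    exact hpow.comp_hasFDerivAt c (EuclideanSpace.proj (𝕜 := ℝ) (ι := Fin n) i).hasFDerivAt
  refine (HasFDerivAt.finsetProd fun i _ => hfactor i).congr_fderiv
    (Finset.sum_congr rfl fun i _ => ?_)
  have hsplit : geomMean n p c = c i ^ p i * ∏ j ∈ Finset.univ.erase i, c j ^ p j :=
    (Finset.mul_prod_erase _ _ (Finset.mem_univ i)).symm
  rw [smul_smul, hsplit, Real.rpow_sub (hc i), Real.rpow_one]
  field_simp

theorem fderiv_geomMean_eventuallyEq (hc : ∀ i, 0 < c i) :
    fderiv ℝ (geomMean n p) =ᶠ[𝓝 c]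
      fun y => ∑ i, (geomMean n p y * p i / y i) • EuclideanSpace.proj (𝕜 := ℝ) (ι := Fin n) i :=
  (EuclideanSpace.eventually_forall_apply_pos hc).mono fun _ hy =>
    (hasFDerivAt_geomMean p hy).fderiv

theorem differentiableAt_fderiv_geomMean (hc : ∀ i, 0 < c i) :
    DifferentiableAt ℝ (fderiv ℝ (geomMean n p)) c := by
  refine DifferentiableAt.congr_of_eventuallyEq ?_ (fderiv_geomMean_eventuallyEq p hc)
  have hg := (hasFDerivAt_geomMean p hc).differentiableAt
  fun_prop (disch := exact (hc _).ne')

theorem geomMeanHess_eq (hc : ∀ i, 0 < c i) (j k : Fin n) :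
    geomMeanHess n p c j k =
      geomMean n p c * (p j * p k - if j = k then p j else 0) / (c j * c k) := by
  have hev : (fun y => fderiv ℝ (geomMean n p) y (EuclideanSpace.single k 1)) =ᶠ[𝓝 c]
      fun y => geomMean n p y * p k * (y k)⁻¹ :=
    (fderiv_geomMean_eventuallyEq p hc).mono fun y hy => by simp [hy, div_eq_mul_inv]
  have hinv : HasFDerivAt (fun y : EuclideanSpace ℝ (Fin n) => (y k)⁻¹)
      (-(c k ^ 2)⁻¹ • EuclideanSpace.proj (𝕜 := ℝ) (ι := Fin n) k) c :=
    (hasDerivAt_inv (hc k).ne').comp_hasFDerivAt c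
      (EuclideanSpace.proj (𝕜 := ℝ) (ι := Fin n) k).hasFDerivAt
  rw [geomMeanHess, hev.fderiv_eq,
    (((hasFDerivAt_geomMean p hc).mul_const (p k)).fun_mul hinv).fderiv]
  have hcj := (hc j).ne'
  have hck := (hc k).ne'
  simp only [add_apply, smul_apply, sum_apply, PiLp.proj_apply, PiLp.single_apply,
    smul_eq_mul, mul_ite, mul_one, mul_zero, Finset.sum_ite_eq', Finset.mem_univ, if_true]
  rcases eq_or_ne j k with rfl | hjk
  · simp only [if_true]
    field_simp
    ring
  · simp only [hjk, hjk.symm, if_false]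
    field_simp
    ring

theorem norm_fderiv_fderiv_geomMean_le_sqrt_sum_sq_geomMeanHess (hc : ∀ i, 0 < c i) :
    ‖fderiv ℝ (fderiv ℝ (geomMean n p)) c‖ ≤
      √(∑ j, ∑ k, geomMeanHess n p c j k ^ 2) := by
  simpa only [geomMeanHess, fderiv_fderiv_apply (differentiableAt_fderiv_geomMean p hc),
    Real.norm_eq_abs, sq_abs] using
    (fderiv ℝ (fderiv ℝ (geomMean n p)) c).opNorm_le_sqrt_sum_sum_sq_norm_apply_single

variable {p}

theorem geomMean_le (hp : ∀ i, 0 ≤ p i) (hsum : ∑ i, p i = 1) {M : ℝ}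
    (hc : ∀ i, c i ∈ Set.Icc 0 M) : geomMean n p c ≤ M :=
  calc geomMean n p c ≤ ∑ i, p i * c i :=
        Real.geom_mean_le_arith_mean_weighted _ _ _ (fun i _ => hp i) hsum fun i _ => (hc i).1
    _ ≤ ∑ i, p i * M := Finset.sum_le_sum fun i _ => mul_le_mul_of_nonneg_left (hc i).2 (hp i)
    _ = M := by rw [← Finset.sum_mul, hsum, one_mul]

theorem sum_sum_sq_geomMeanHess_le (hp : ∀ i, 0 ≤ p i) (hsum : ∑ i, p i = 1) {M : ℝ}
    (hc : ∀ i, c i ∈ Set.Icc 1 M) : ∑ j, ∑ k, geomMeanHess n p c j k ^ 2 ≤ 2 * M ^ 2 := by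
  have hpos (i : Fin n) : 0 < c i := zero_lt_one.trans_le (hc i).1
  have hg0 : 0 ≤ geomMean n p c := Finset.prod_nonneg fun i _ => Real.rpow_nonneg (hpos i).le _
  have hgM : geomMean n p c ≤ M :=
    geomMean_le hp hsum fun i => ⟨(hpos i).le, (hc i).2⟩
  have hentry (j k : Fin n) : geomMeanHess n p c j k ^ 2 ≤
      M ^ 2 * (p j * p k - if j = k then p j else 0) ^ 2 := by
    have hcc : 1 ≤ (c j * c k) ^ 2 := one_le_pow₀ (one_le_mul_of_one_le_of_one_le (hc j).1 (hc k).1)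
    rw [geomMeanHess_eq p hpos, div_pow, mul_pow]
    calc _ ≤ geomMean n p c ^ 2 * (p j * p k - if j = k then p j else 0) ^ 2 :=
          div_le_self (by positivity) hcc
      _ ≤ _ := by gcongr
  calc ∑ j, ∑ k, geomMeanHess n p c j k ^ 2
      ≤ ∑ j, ∑ k, M ^ 2 * (p j * p k - if j = k then p j else 0) ^ 2 :=
        Finset.sum_le_sum fun j _ => Finset.sum_le_sum fun k _ => hentry j k
    _ = M ^ 2 * ∑ j, ∑ k, (p j * p k - if j = k then p j else 0) ^ 2 := by
        simp only [Finset.mul_sum]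
    _ ≤ M ^ 2 * 2 := by gcongr; exact Finset.sum_sum_sq_mul_sub_ite_le_two hp hsum
    _ = 2 * M ^ 2 := mul_comm _ _

end GeomMean

/-- Let `p₁,…,pₙ ≥ 0` sum to one and `M ≥ 1`.  On the cube `[1,M]ⁿ` the Hessian of the
weighted geometric mean `g` satisfies `‖∇²g(c)‖₂ ≤ ‖∇²g(c)‖_F ≤ √2·M` (the spectral
norm is realized as the operator norm of the second Fréchet derivative and the
Frobenius norm as the square root of the sum of squared entries), and consequently
`|g(v₁) − g(v₂) − ⟨∇g(v₂), v₁ − v₂⟩| ≤ (√2·M/2)·‖v₁ − v₂‖²` on the cube. -/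
theorem geomMean_hessian_bound (n : ℕ) (p : Fin n → ℝ)
    (hp : ∀ i, 0 ≤ p i) (hsum : ∑ i, p i = 1) (M : ℝ) (hM : 1 ≤ M) :
    (∀ c : EuclideanSpace ℝ (Fin n), (∀ i, c i ∈ Set.Icc (1 : ℝ) M) →
      ‖fderiv ℝ (fderiv ℝ (geomMean n p)) c‖ ≤
          Real.sqrt (∑ j, ∑ k, geomMeanHess n p c j k ^ 2) ∧
        Real.sqrt (∑ j, ∑ k, geomMeanHess n p c j k ^ 2) ≤ Real.sqrt 2 * M) ∧
    (∀ v₁ v₂ : EuclideanSpace ℝ (Fin n),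
      (∀ i, v₁ i ∈ Set.Icc (1 : ℝ) M) → (∀ i, v₂ i ∈ Set.Icc (1 : ℝ) M) →
        |geomMean n p v₁ - geomMean n p v₂ -
            (inner ℝ (gradient (geomMean n p) v₂) (v₁ - v₂) : ℝ)| ≤
          Real.sqrt 2 * M / 2 * ‖v₁ - v₂‖ ^ 2) := by
  have pos_of_mem {c : EuclideanSpace ℝ (Fin n)} (hc : ∀ i, c i ∈ Set.Icc (1 : ℝ) M)
      (i : Fin n) : 0 < c i := zero_lt_one.trans_le (hc i).1
  have hessian_bound (c : EuclideanSpace ℝ (Fin n)) (hc : ∀ i, c i ∈ Set.Icc (1 : ℝ) M) :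
      ‖fderiv ℝ (fderiv ℝ (geomMean n p)) c‖ ≤
          √(∑ j, ∑ k, geomMeanHess n p c j k ^ 2) ∧
        √(∑ j, ∑ k, geomMeanHess n p c j k ^ 2) ≤ √2 * M := by
    refine ⟨norm_fderiv_fderiv_geomMean_le_sqrt_sum_sq_geomMeanHess p (pos_of_mem hc), ?_⟩
    calc √(∑ j, ∑ k, geomMeanHess n p c j k ^ 2) ≤ √(2 * M ^ 2) :=
          Real.sqrt_le_sqrt (sum_sum_sq_geomMeanHess_le hp hsum hc)
      _ = √2 * M := by rw [Real.sqrt_mul zero_le_two, Real.sqrt_sq (by linarith)]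
  refine ⟨hessian_bound, fun v₁ v₂ h₁ h₂ => ?_⟩
  have taylor := Convex.norm_image_sub_sub_fderiv_le
    (convex_setOf_forall_apply_mem fun _ => convex_Icc (1 : ℝ) M)
    (fun c hc => (hasFDerivAt_geomMean p (pos_of_mem hc)).differentiableAt)
    (fun c hc => differentiableAt_fderiv_geomMean p (pos_of_mem hc))
    (fun c hc => (hessian_bound c hc).1.trans (hessian_bound c hc).2) h₂ h₁
  simpa [inner_gradient_left] using taylor
end

section
/- Let (X, 𝒜_X, ν_X) and (Y, 𝒜_Y, ν_Y) be finite measure spaces with ν_X ≠ 0 and ν_Y ≠ 0, let n ∈ ℕ, let q₁,…,qₙ ≥ 0 with Σ_{i=1}^n q_i = 1, and let h₁,…,hₙ : X × Y → ℝ be bounded jointly measurable functions. Then lim_{ε → 0⁺} ε · log ∫_X ∏_{i=1}^n ( ∫_Y exp(h_i(x, y)/ε) dν_Y(y) )^{q_i} dν_X(x) = ess sup_{ν_X, x} Σ_{i=1}^n q_i · ess sup_{ν_Y, y} h_i(x, y), where for each i the inner map x ↦ ess sup_{ν_Y, y} h_i(x, y) is measurable and the outer essential supremum is taken with respect to ν_X.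 -/
open MeasureTheory Filter
open scoped BigOperators

/-!
For bounded `f` and `ε > 0`, the Laplace integral `∫ exp (f / ε) dμ` lies between
`μ {f ≥ ess sup f - δ} · exp ((ess sup f - δ) / ε)` and `μ(univ) · exp (ess sup f / ε)`, and the
measure in the lower bound is positive by the definition of the essential supremum. As the
weights `qᵢ` sum to one, the product `∏ᵢ (∫ exp (hᵢ(x, ·) / ε))^{qᵢ}` is squeezed between
`ρ(x) · exp ((G x - δ) / ε)` and `ν_Y(univ) · exp (G x / ε)`, with `G x = ∑ᵢ qᵢ · ess sup hᵢ(x, ·)`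
and `ρ > 0` independent of `ε`. Integrating over the set `{G > ess sup G - δ}`, which has positive
measure, squeezes the outer integral between `K_δ · exp ((ess sup G - 2δ) / ε)` and
`K · exp (ess sup G / ε)`; as `ε → 0⁺`, `ε · log` of these bounds tends to `ess sup G - 2δ` and
`ess sup G`.
-/

open Set Real

section EssSup

variable {α : Type*} [MeasurableSpace α] {μ : Measure α} {f : α → ℝ} {C : ℝ}

lemma isBoundedUnder_ae_le_of_abs_le (hf : ∀ x, |f x| ≤ C) :
    IsBoundedUnder (· ≤ ·) (ae μ) f :=
  isBoundedUnder_of ⟨C, fun x => (abs_le.1 (hf x)).2⟩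

lemma isCoboundedUnder_ae_le_of_abs_le [NeZero μ] (hf : ∀ x, |f x| ≤ C) :
    IsCoboundedUnder (· ≤ ·) (ae μ) f :=
  isCoboundedUnder_le_of_le (ae μ) fun x => (abs_le.1 (hf x)).1

lemma essSup_le_iff_measure_lt_eq_zero [NeZero μ] (hf : ∀ x, |f x| ≤ C) {c : ℝ} :
    essSup f μ ≤ c ↔ μ {x | c < f x} = 0 := by
  refine ⟨fun hc => measure_mono_null (fun x hx => hc.trans_lt hx)
    (meas_essSup_lt (isBoundedUnder_ae_le_of_abs_le hf)), fun hc => ?_⟩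
  refine essSup_le_of_ae_le c ?_ (isCoboundedUnder_ae_le_of_abs_le hf)
  simpa [EventuallyLE, ae_iff] using hc

lemma abs_essSup_le [NeZero μ] (hf : ∀ x, |f x| ≤ C) : |essSup f μ| ≤ C := by
  refine abs_le.2 ⟨not_lt.1 fun hlt => ?_, essSup_le_of_ae_le C
    (ae_of_all _ fun x => (abs_le.1 (hf x)).2) (isCoboundedUnder_ae_le_of_abs_le hf)⟩
  obtain ⟨x, hx⟩ := (ae_lt_of_essSup_lt hlt (isBoundedUnder_ae_le_of_abs_le hf)).exists
  linarith [(abs_le.1 (hf x)).1]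

lemma measure_essSup_sub_lt_ne_zero [NeZero μ] (hf : ∀ x, |f x| ≤ C) {δ : ℝ} (hδ : 0 < δ) :
    μ {x | essSup f μ - δ < f x} ≠ 0 := fun h0 => by
  linarith [(essSup_le_iff_measure_lt_eq_zero hf).2 h0]

lemma measurable_essSup_of_measurable_uncurry {X Y : Type*} [MeasurableSpace X]
    [MeasurableSpace Y] {ν : Measure Y} [SFinite ν] [NeZero ν] {h : X → Y → ℝ}
    (hm : Measurable (Function.uncurry h)) (hh : ∀ x y, |h x y| ≤ C) :
    Measurable fun x => essSup (h x) ν := by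
  refine measurable_of_Iic fun t => ?_
  let E : Set (X × Y) := {z | t < Function.uncurry h z}
  have hfiber : (fun x => essSup (h x) ν) ⁻¹' Iic t = (fun x => ν (Prod.mk x ⁻¹' E)) ⁻¹' {0} :=
    Set.ext fun x => essSup_le_iff_measure_lt_eq_zero (hh x)
  rw [hfiber]
  exact measurable_measure_prodMk_left (measurableSet_lt measurable_const hm)
    (measurableSet_singleton 0)

end EssSup

section Laplace

variable {α : Type*} [MeasurableSpace α] {μ : Measure α} {f : α → ℝ} {C ε : ℝ}

lemma integrable_exp_div_of_le [IsFiniteMeasure μ] (hf : Measurable f) (hfC : ∀ x, f x ≤ C)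
    (hε : 0 < ε) : Integrable (fun x => exp (f x / ε)) μ :=
  (integrable_const (exp (C / ε))).mono' (hf.div_const ε).exp.aestronglyMeasurable
    (ae_of_all _ fun x => by
      rw [norm_of_nonneg (exp_pos _).le]
      exact exp_le_exp.2 (div_le_div_of_nonneg_right (hfC x) hε.le))

lemma integral_exp_div_le_of_ae_le [IsFiniteMeasure μ] {s : ℝ} (hf : ∀ᵐ x ∂μ, f x ≤ s)
    (hε : 0 < ε) :
    ∫ x, exp (f x / ε) ∂μ ≤ μ.real univ * exp (s / ε) := by
  calc ∫ x, exp (f x / ε) ∂μ ≤ ∫ _, exp (s / ε) ∂μ :=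
        integral_mono_of_nonneg (ae_of_all _ fun x => (exp_pos _).le) (integrable_const _)
          (hf.mono fun x hx => exp_le_exp.2 (div_le_div_of_nonneg_right hx hε.le))
    _ = μ.real univ * exp (s / ε) := by rw [integral_const, smul_eq_mul]

lemma measureReal_mul_exp_div_le_integral_exp_div {t : ℝ} (hε : 0 < ε)
    (hi : Integrable (fun x => exp (f x / ε)) μ) :
    μ.real {x | t ≤ f x} * exp (t / ε) ≤ ∫ x, exp (f x / ε) ∂μ := by
  have := mul_meas_ge_le_integral_of_nonneg (ae_of_all _ fun x => (exp_pos _).le) hi (exp (t / ε))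
  simpa only [exp_le_exp, div_le_div_iff_of_pos_right hε, mul_comm] using this

end Laplace

section WeightedProduct

variable {ι : Type*} {s : Finset ι} {q : ι → ℝ}

lemma prod_rpow_mul_exp {c a : ι → ℝ} (hc : ∀ i ∈ s, 0 ≤ c i) :
    ∏ i ∈ s, (c i * exp (a i)) ^ q i = (∏ i ∈ s, c i ^ q i) * exp (∑ i ∈ s, q i * a i) := by
  rw [exp_sum, ← Finset.prod_mul_distrib]
  refine Finset.prod_congr rfl fun i hi => ?_
  rw [mul_rpow (hc i hi) (exp_pos _).le, ← exp_mul, mul_comm (a i)]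

lemma abs_sum_mul_le_of_abs_le {a : ι → ℝ} {C : ℝ} (hq : ∀ i ∈ s, 0 ≤ q i)
    (hqsum : ∑ i ∈ s, q i = 1) (ha : ∀ i ∈ s, |a i| ≤ C) : |∑ i ∈ s, q i * a i| ≤ C :=
  calc |∑ i ∈ s, q i * a i| ≤ ∑ i ∈ s, |q i * a i| := Finset.abs_sum_le_sum_abs _ _
    _ ≤ ∑ i ∈ s, q i * C := Finset.sum_le_sum fun i hi => by
        rw [abs_mul, abs_of_nonneg (hq i hi)]
        exact mul_le_mul_of_nonneg_left (ha i hi) (hq i hi)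
    _ = C := by rw [← Finset.sum_mul, hqsum, one_mul]

end WeightedProduct

section LaplaceProduct

variable {ι : Type*} [Fintype ι] {X Y : Type*} [MeasurableSpace Y] {ν : Measure Y} {q : ι → ℝ}
  {h : ι → X → Y → ℝ} {C ε : ℝ}

noncomputable def laplaceProduct (ν : Measure Y) (q : ι → ℝ) (h : ι → X → Y → ℝ) (ε : ℝ)
    (x : X) : ℝ :=
  ∏ i, (∫ y, exp (h i x y / ε) ∂ν) ^ q i

lemma laplaceProduct_nonneg (x : X) : 0 ≤ laplaceProduct ν q h ε x :=
  Finset.prod_nonneg fun _ _ =>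
    rpow_nonneg (integral_nonneg fun _ => (exp_pos _).le) _

lemma measurable_laplaceProduct [MeasurableSpace X] [SFinite ν]
    (hm : ∀ i, Measurable (Function.uncurry (h i))) :
    Measurable (laplaceProduct ν q h ε) :=
  Finset.measurable_prod _ fun i _ =>
    (((hm i).div_const ε).exp.stronglyMeasurable.integral_prod_right').measurable.pow_const _

lemma laplaceProduct_le [IsFiniteMeasure ν] (hq : ∀ i, 0 ≤ q i) (hqsum : ∑ i, q i = 1)
    (hh : ∀ i x y, |h i x y| ≤ C) (hε : 0 < ε) (x : X) :
    laplaceProduct ν q h ε x ≤ ν.real univ * exp ((∑ i, q i * essSup (h i x) ν) / ε) :=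
  calc laplaceProduct ν q h ε x
      ≤ ∏ i, (ν.real univ * exp (essSup (h i x) ν / ε)) ^ q i :=
        Finset.prod_le_prod (fun _ _ => rpow_nonneg (integral_nonneg fun _ => (exp_pos _).le) _)
          fun i _ => rpow_le_rpow (integral_nonneg fun _ => (exp_pos _).le)
            (integral_exp_div_le_of_ae_le
              (ae_le_essSup (isBoundedUnder_ae_le_of_abs_le (hh i x))) hε)
            (hq i)
    _ = ν.real univ * exp ((∑ i, q i * essSup (h i x) ν) / ε) := by
        rw [prod_rpow_mul_exp fun _ _ => measureReal_nonneg,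
          ← rpow_sum_of_nonneg measureReal_nonneg fun i _ => hq i, hqsum, rpow_one,
          Finset.sum_div]
        simp only [mul_div_assoc]

lemma integrable_laplaceProduct [MeasurableSpace X] {μ : Measure X} [IsFiniteMeasure μ]
    [IsFiniteMeasure ν] [NeZero ν]
    (hq : ∀ i, 0 ≤ q i) (hqsum : ∑ i, q i = 1) (hm : ∀ i, Measurable (Function.uncurry (h i)))
    (hh : ∀ i x y, |h i x y| ≤ C) (hε : 0 < ε) : Integrable (laplaceProduct ν q h ε) μ := by
  refine (integrable_const (ν.real univ * exp (C / ε))).mono'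
    (measurable_laplaceProduct hm).aestronglyMeasurable (ae_of_all _ fun x => ?_)
  have hG : ∑ i, q i * essSup (h i x) ν ≤ C := (abs_le.1 (abs_sum_mul_le_of_abs_le
    (fun i _ => hq i) hqsum fun i _ => abs_essSup_le (hh i x))).2
  rw [norm_of_nonneg (laplaceProduct_nonneg x)]
  refine (laplaceProduct_le hq hqsum hh hε x).trans ?_
  gcongr

lemma exists_pos_mul_exp_le_laplaceProduct [MeasurableSpace X] [IsFiniteMeasure ν] [NeZero ν]
    (hq : ∀ i, 0 ≤ q i) (hqsum : ∑ i, q i = 1) (hm : ∀ i, Measurable (Function.uncurry (h i)))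
    (hh : ∀ i x y, |h i x y| ≤ C) {δ : ℝ} (hδ : 0 < δ) :
    ∃ ρ : X → ℝ, Measurable ρ ∧ (∀ x, 0 < ρ x ∧ ρ x ≤ ν.real univ) ∧ ∀ ε > 0, ∀ x,
      ρ x * exp ((∑ i, q i * essSup (h i x) ν - δ) / ε) ≤ laplaceProduct ν q h ε x := by
  set ρ : X → ℝ := fun x => ∏ i, ν.real {y | essSup (h i x) ν - δ ≤ h i x y} ^ q i
  have hset : ∀ i, MeasurableSet {z : X × Y | essSup (h i z.1) ν - δ ≤ h i z.1 z.2} := fun i =>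
    measurableSet_le (((measurable_essSup_of_measurable_uncurry (hm i) (hh i)).comp
      measurable_fst).sub_const δ) (hm i)
  refine ⟨ρ, Finset.measurable_prod _ fun i _ =>
    (measurable_measure_prodMk_left (hset i)).ennreal_toReal.pow_const _,
    fun x => ⟨Finset.prod_pos fun i _ => rpow_pos_of_pos ?_ _, ?_⟩, fun ε hε x => ?_⟩
  · refine ENNReal.toReal_pos (fun h0 => ?_) (measure_ne_top _ _)
    refine measure_essSup_sub_lt_ne_zero (hh i x) hδ (measure_mono_null ?_ h0)
    exact fun y (hy : essSup (h i x) ν - δ < h i x y) => hy.le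
  · calc ρ x ≤ ∏ i, ν.real univ ^ q i :=
          Finset.prod_le_prod (fun _ _ => rpow_nonneg measureReal_nonneg _) fun i _ =>
            rpow_le_rpow measureReal_nonneg (measureReal_mono (subset_univ _)) (hq i)
      _ = ν.real univ := by
          rw [← rpow_sum_of_nonneg measureReal_nonneg fun i _ => hq i, hqsum, rpow_one]
  have hsum : ∑ i, q i * ((essSup (h i x) ν - δ) / ε) = (∑ i, q i * essSup (h i x) ν - δ) / ε := by
    simp only [mul_div_assoc', ← Finset.sum_div, mul_sub, Finset.sum_sub_distrib, ← Finset.sum_mul,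
      hqsum, one_mul]
  calc ρ x * exp ((∑ i, q i * essSup (h i x) ν - δ) / ε)
      = ∏ i, (ν.real {y | essSup (h i x) ν - δ ≤ h i x y} *
          exp ((essSup (h i x) ν - δ) / ε)) ^ q i := by
        rw [prod_rpow_mul_exp fun _ _ => measureReal_nonneg, hsum]
    _ ≤ laplaceProduct ν q h ε x :=
        Finset.prod_le_prod (fun _ _ => rpow_nonneg (by positivity) _) fun i _ =>
          rpow_le_rpow (by positivity) (measureReal_mul_exp_div_le_integral_exp_div hε
            (integrable_exp_div_of_le ((hm i).comp measurable_prodMk_left)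
              (fun y => (abs_le.1 (hh i x y)).2) hε)) (hq i)

end LaplaceProduct

section NestedIntegral

variable {ι : Type*} [Fintype ι] {X Y : Type*} [MeasurableSpace X] [MeasurableSpace Y]
  {μ : Measure X} {ν : Measure Y} {q : ι → ℝ} {h : ι → X → Y → ℝ} {C ε : ℝ}

lemma integral_laplaceProduct_le [IsFiniteMeasure μ] [IsFiniteMeasure ν] [NeZero ν]
    (hq : ∀ i, 0 ≤ q i) (hqsum : ∑ i, q i = 1) (hh : ∀ i x y, |h i x y| ≤ C) (hε : 0 < ε) :
    ∫ x, laplaceProduct ν q h ε x ∂μ ≤ μ.real univ * ν.real univ *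
      exp (essSup (fun x => ∑ i, q i * essSup (h i x) ν) μ / ε) := by
  have hG : ∀ x, |∑ i, q i * essSup (h i x) ν| ≤ C := fun x =>
    abs_sum_mul_le_of_abs_le (fun i _ => hq i) hqsum fun i _ => abs_essSup_le (hh i x)
  calc ∫ x, laplaceProduct ν q h ε x ∂μ
      ≤ ∫ _, ν.real univ * exp (essSup (fun x => ∑ i, q i * essSup (h i x) ν) μ / ε) ∂μ :=
        integral_mono_of_nonneg (ae_of_all _ laplaceProduct_nonneg) (integrable_const _)
          ((ae_le_essSup (isBoundedUnder_ae_le_of_abs_le hG)).mono fun x hx =>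
            (laplaceProduct_le hq hqsum hh hε x).trans (mul_le_mul_of_nonneg_left
              (exp_le_exp.2 (div_le_div_of_nonneg_right hx hε.le)) measureReal_nonneg))
    _ = _ := by rw [integral_const, smul_eq_mul, mul_assoc]

lemma exists_pos_mul_exp_le_integral_laplaceProduct [IsFiniteMeasure μ] [NeZero μ]
    [IsFiniteMeasure ν] [NeZero ν] (hq : ∀ i, 0 ≤ q i) (hqsum : ∑ i, q i = 1)
    (hm : ∀ i, Measurable (Function.uncurry (h i))) (hh : ∀ i x y, |h i x y| ≤ C)
    {δ : ℝ} (hδ : 0 < δ) :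
    ∃ K > 0, ∀ ε > 0, K * exp ((essSup (fun x => ∑ i, q i * essSup (h i x) ν) μ - δ) / ε) ≤
      ∫ x, laplaceProduct ν q h ε x ∂μ := by
  set G : X → ℝ := fun x => ∑ i, q i * essSup (h i x) ν
  have hG : ∀ x, |G x| ≤ C := fun x =>
    abs_sum_mul_le_of_abs_le (fun i _ => hq i) hqsum fun i _ => abs_essSup_le (hh i x)
  have hGm : Measurable G := Finset.measurable_sum _ fun i _ =>
    (measurable_essSup_of_measurable_uncurry (hm i) (hh i)).const_mul _
  obtain ⟨ρ, hρm, hρ, hρΦ⟩ :=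
    exists_pos_mul_exp_le_laplaceProduct (ν := ν) hq hqsum hm hh (half_pos hδ)
  have hρi : Integrable ρ μ := (integrable_const (ν.real univ)).mono' hρm.aestronglyMeasurable
    (ae_of_all _ fun x => by rw [norm_of_nonneg (hρ x).1.le]; exact (hρ x).2)
  set A := {x | essSup G μ - δ / 2 < G x}
  refine ⟨∫ x in A, ρ x ∂μ, ?_, fun ε hε => ?_⟩
  · have hsupp : Function.support ρ ∩ A = A := inter_eq_right.2 fun x _ => (hρ x).1.ne'
    rw [gt_iff_lt, setIntegral_pos_iff_support_of_nonneg_ae (ae_of_all _ fun x => (hρ x).1.le)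
      hρi.integrableOn, hsupp]
    exact pos_iff_ne_zero.2 (measure_essSup_sub_lt_ne_zero hG (half_pos hδ))
  have hΦ : Integrable (laplaceProduct ν q h ε) μ := integrable_laplaceProduct hq hqsum hm hh hε
  calc (∫ x in A, ρ x ∂μ) * exp ((essSup G μ - δ) / ε)
      = ∫ x in A, ρ x * exp ((essSup G μ - δ) / ε) ∂μ := (integral_mul_const _ _).symm
    _ ≤ ∫ x in A, laplaceProduct ν q h ε x ∂μ := by
        refine setIntegral_mono_on (hρi.integrableOn.mul_const _) hΦ.integrableOn
          (measurableSet_lt measurable_const hGm)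
          fun x (hx : essSup G μ - δ / 2 < ∑ i, q i * essSup (h i x) ν) => ?_
        refine le_trans (mul_le_mul_of_nonneg_left ?_ (hρ x).1.le) (hρΦ ε hε x)
        exact exp_le_exp.2 (div_le_div_of_nonneg_right (by linarith) hε.le)
    _ ≤ ∫ x, laplaceProduct ν q h ε x ∂μ :=
        setIntegral_le_integral hΦ (ae_of_all _ laplaceProduct_nonneg)

end NestedIntegral

section Limit

open Topology

lemma mul_log_mul_exp_div {K ε : ℝ} (c : ℝ) (hK : 0 < K) (hε : ε ≠ 0) :
    ε * log (K * exp (c / ε)) = ε * log K + c := by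
  rw [log_mul hK.ne' (exp_pos _).ne', log_exp, mul_add, mul_div_cancel₀ _ hε]

lemma tendsto_mul_log_of_exp_bounds {I : ℝ → ℝ} {K M : ℝ}
    (hup : ∀ ε > 0, I ε ≤ K * exp (M / ε))
    (hlow : ∀ δ > 0, ∃ K' > 0, ∀ ε > 0, K' * exp ((M - δ) / ε) ≤ I ε) :
    Tendsto (fun ε => ε * log (I ε)) (𝓝[>] 0) (𝓝 M) := by
  have hlin : ∀ c, Tendsto (fun ε : ℝ => ε * c) (𝓝[>] 0) (𝓝 0) := fun c => by
    simpa using (tendsto_id.mul_const c).mono_left (nhdsWithin_le_nhds (a := (0 : ℝ)))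
  have hlower : ∀ δ > 0, ∃ K' > 0, ∀ ε > 0, ε * log K' + (M - δ) ≤ ε * log (I ε) := by
    intro δ hδ
    obtain ⟨K', hK', hK'I⟩ := hlow δ hδ
    refine ⟨K', hK', fun ε hε => ?_⟩
    rw [← mul_log_mul_exp_div _ hK' hε.ne']
    exact mul_le_mul_of_nonneg_left (log_le_log (by positivity) (hK'I ε hε)) hε.le
  obtain ⟨K₁, hK₁, hK₁I⟩ := hlow 1 one_pos
  have hIpos : ∀ ε > 0, 0 < I ε := fun ε hε =>
    (mul_pos hK₁ (exp_pos _)).trans_le (hK₁I ε hε)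
  have hK : 0 < K := (mul_pos_iff_of_pos_right (exp_pos _)).1
    ((hIpos 1 one_pos).trans_le (hup 1 one_pos))
  have hupper : ∀ ε > 0, ε * log (I ε) ≤ ε * log K + M := fun ε hε => by
    rw [← mul_log_mul_exp_div _ hK hε.ne']
    exact mul_le_mul_of_nonneg_left (log_le_log (hIpos ε hε) (hup ε hε)) hε.le
  refine tendsto_order.2 ⟨fun b hb => ?_, fun b hb => ?_⟩
  · obtain ⟨K', -, hK'I⟩ := hlower ((M - b) / 2) (by linarith)
    have hb' : -((M - b) / 2) < 0 := by linarith
    filter_upwards [(hlin (log K')).eventually (eventually_gt_nhds hb'), self_mem_nhdsWithin]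
      with ε hε hε0
    linarith [hK'I ε hε0]
  · filter_upwards [(hlin (log K)).eventually (eventually_lt_nhds (sub_pos.2 hb)),
      self_mem_nhdsWithin] with ε hε hε0
    linarith [hupper ε hε0]

end Limit

/-- Two-level Laplace principle: for finite nonzero measures `ν_X, ν_Y`, nonnegative
weights `q_i` summing to one, and bounded jointly measurable functions `h_i`,
`ε · log ∫_X ∏ i (∫_Y exp(h_i(x,y)/ε) dν_Y)^{q_i} dν_X` converges, as `ε → 0⁺`, to
`ess sup_{ν_X, x} Σ i, q_i · ess sup_{ν_Y, y} h_i(x,y)`; moreover each inner map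
`x ↦ ess sup_{ν_Y, y} h_i(x,y)` is measurable. -/
theorem nested_laplace_principle {X Y : Type*} [MeasurableSpace X] [MeasurableSpace Y]
    (νX : Measure X) (νY : Measure Y)
    [IsFiniteMeasure νX] [IsFiniteMeasure νY] (hX : νX ≠ 0) (hY : νY ≠ 0)
    (n : ℕ) (q : Fin n → ℝ) (hq : ∀ i, 0 ≤ q i) (hqsum : ∑ i, q i = 1)
    (h : Fin n → X → Y → ℝ)
    (hmeas : ∀ i, Measurable (fun z : X × Y => h i z.1 z.2))
    (C : ℝ) (hbdd : ∀ i x y, |h i x y| ≤ C) :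
    (∀ i, Measurable (fun x => essSup (fun y => h i x y) νY)) ∧
      Tendsto
        (fun ε : ℝ =>
          ε * Real.log (∫ x, ∏ i, (∫ y, Real.exp (h i x y / ε) ∂νY) ^ q i ∂νX))
        (nhdsWithin 0 (Set.Ioi 0))
        (nhds (essSup (fun x => ∑ i, q i * essSup (fun y => h i x y) νY) νX)) := by
  have : NeZero νX := ⟨hX⟩
  have : NeZero νY := ⟨hY⟩
  exact ⟨fun i => measurable_essSup_of_measurable_uncurry (hmeas i) (hbdd i),
    tendsto_mul_log_of_exp_bounds (fun _ hε => integral_laplaceProduct_le hq hqsum hbdd hε)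
      fun _ hδ => exists_pos_mul_exp_le_integral_laplaceProduct hq hqsum hmeas hbdd hδ⟩
end

section
/- Let f : ℝ^{d} → ℝ^{m} be continuously differentiable, let x ∈ ℝ^{d}, and let x¹, …, x^N ∈ ℝ^{d}. For j ∈ {1,…,d} and k ∈ {1,…,m} define the empirical integrated gradient φ_{j,k} = (1/N) Σ_{i=1}^N (x_j − x_j^{i}) · ∫₀¹ (∂f_k/∂x_j)(x^{i} + α(x − x^{i})) dα. Then for every k ∈ {1,…,m}, f_k(x) − (1/N) Σ_{i=1}^N f_k(x^{i}) = Σ_{j=1}^{d} φ_{j,k}. -/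
open scoped BigOperators

/-! By the fundamental theorem of calculus along the segment from `xⁱ` to `x`,
`f_k x - f_k xⁱ` is the integral of the derivative of `f_k` in the direction `x - xⁱ`;
expanding that direction in the standard basis splits it into the per-coordinate terms,
and averaging over `i` gives the decomposition. -/

section Segment

variable {E F : Type*} [NormedAddCommGroup E] [NormedSpace ℝ E]
  [NormedAddCommGroup F] [NormedSpace ℝ F]

theorem ContDiff.continuous_fderiv_segment_apply {g : E → F} (hg : ContDiff ℝ 1 g)
    (a b v : E) : Continuous fun α : ℝ => fderiv ℝ g (a + α • (b - a)) v := by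
  fun_prop (disch := exact hg.continuous_fderiv one_ne_zero)

theorem ContDiff.integral_fderiv_segment_eq_sub [CompleteSpace F] {g : E → F}
    (hg : ContDiff ℝ 1 g) (a b : E) :
    ∫ α in (0 : ℝ)..1, fderiv ℝ g (a + α • (b - a)) (b - a) = g b - g a := by
  have hline (α : ℝ) : HasDerivAt (fun t : ℝ => a + t • (b - a)) (b - a) α := by
    simpa using ((hasDerivAt_id α).smul_const (b - a)).const_add a
  have hderiv (α : ℝ) : HasDerivAt (fun t => g (a + t • (b - a)))
      (fderiv ℝ g (a + α • (b - a)) (b - a)) α :=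
    (hg.differentiable one_ne_zero _).hasFDerivAt.comp_hasDerivAt α (hline α)
  simpa using intervalIntegral.integral_eq_sub_of_hasDerivAt (fun α _ => hderiv α)
    ((hg.continuous_fderiv_segment_apply a b (b - a)).intervalIntegrable 0 1)

end Segment

theorem EuclideanSpace.map_eq_sum_smul_map_single {𝕜 ι F : Type*} [RCLike 𝕜] [Fintype ι]
    [DecidableEq ι] [AddCommMonoid F] [Module 𝕜 F] (L : EuclideanSpace 𝕜 ι →ₗ[𝕜] F)
    (v : EuclideanSpace 𝕜 ι) : L v = ∑ j, v j • L (EuclideanSpace.single j 1) := by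
  conv_lhs => rw [← (EuclideanSpace.basisFun ι 𝕜).sum_repr v]
  simp [map_sum, map_smul]

theorem ContDiff.sub_eq_sum_mul_integral_partialDeriv {ι : Type*} [Fintype ι] [DecidableEq ι]
    {g : EuclideanSpace ℝ ι → ℝ} (hg : ContDiff ℝ 1 g) (a b : EuclideanSpace ℝ ι) :
    g b - g a = ∑ j, (b j - a j) *
      ∫ α in (0 : ℝ)..1, fderiv ℝ g (a + α • (b - a)) (EuclideanSpace.single j 1) := by
  have hint (j : ι) : IntervalIntegrable
      (fun α : ℝ => (b j - a j) * fderiv ℝ g (a + α • (b - a)) (EuclideanSpace.single j 1))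
      MeasureTheory.volume 0 1 :=
    ((hg.continuous_fderiv_segment_apply a b _).const_mul _).intervalIntegrable 0 1
  simp_rw [← hg.integral_fderiv_segment_eq_sub a b, ← intervalIntegral.integral_const_mul,
    ← intervalIntegral.integral_finsetSum fun j _ => hint j]
  congr with α
  simpa using
    EuclideanSpace.map_eq_sum_smul_map_single (fderiv ℝ g (a + α • (b - a))).toLinearMap (b - a)

/-- Empirical integrated gradient decomposition: for a continuously differentiable
`f : ℝ^d → ℝ^m`, a point `x`, and baseline points `x¹,…,x^N`, the empirical integrated
gradient attributions `φ_{j,k} = (1/N) Σ_i (x_j − x_j^i) ∫₀¹ (∂f_k/∂x_j)(x^i + α(x−x^i)) dα`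
exactly decompose the deviation of the decision from the average baseline:
`f_k(x) − (1/N) Σ_i f_k(x^i) = Σ_j φ_{j,k}` for every `k`. -/
theorem eig_decomposition (d m N : ℕ) (hN : 0 < N)
    (f : EuclideanSpace ℝ (Fin d) → EuclideanSpace ℝ (Fin m))
    (hf : ContDiff ℝ 1 f)
    (x : EuclideanSpace ℝ (Fin d)) (xs : Fin N → EuclideanSpace ℝ (Fin d)) :
    ∀ k : Fin m,
      f x k - (1 / (N : ℝ)) * ∑ i, f (xs i) k =
        ∑ j : Fin d, (1 / (N : ℝ)) * ∑ i,
          (x j - xs i j) *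
            ∫ α in (0 : ℝ)..1,
              fderiv ℝ (fun y => f y k) (xs i + α • (x - xs i))
                (EuclideanSpace.single j 1) := by
  intro k
  have hfk : ContDiff ℝ 1 (fun y => f y k) := contDiff_euclidean.mp hf k
  have hN0 : (N : ℝ) ≠ 0 := by positivity
  calc f x k - (1 / (N : ℝ)) * ∑ i, f (xs i) k
      = (1 / (N : ℝ)) * ∑ i, (f x k - f (xs i) k) := by
        simp [Finset.sum_sub_distrib, mul_sub, hN0]
    _ = _ := by
        simp_rw [hfk.sub_eq_sum_mul_integral_partialDeriv (xs _) x, Finset.mul_sum]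
        exact Finset.sum_comm
end
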